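/- arXiv:0709.4106 — 5 statements merged into one kernel-verified Lean document; each statement's English description precedes it below -/
import Mathlib

section
/- Let N ≥ 1 be an integer, let 0 < a < b and let t > 0. Then the supremum of σ^{−N/2} e^{−ρ²/(4σ)} over all pairs (ρ,σ) with ρ ≥ 0, 0 < σ ≤ t and at ≤ ρ² + σ ≤ bt is attained, and it equals e^{1/4} t^{−N/2} e^{−a/4} if a/(2N) > 1, and equals e^{1/4} (2N/(at))^{N/2} e^{−N/2} if a/(2N) ≤ 1. -/
open Real

/-! Writing `x = c / (4σ)` with `c = a t`, the constraint `ρ² ≥ c - σ` gives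
`σ^{-p} e^{-ρ²/(4σ)} ≤ e^{1/4} (4/c)^p · x^p e^{-x}` with `p = N/2`, with equality on `ρ² = c - σ`.
The profile `x ↦ x^p e^{-x}` is unimodal with peak at `x = p`, and `σ ≤ t` means `x ≥ a/4`;
so the maximum sits at `x = p` when `a/4 ≤ p`, and at the endpoint `x = a/4` otherwise. -/

/-- Unimodality of `x ↦ x^p e^{-x}` around its peak `p`, from `log u ≤ u - 1` at `u = x / y`. -/
lemma rpow_mul_exp_neg_le_of_between {p x y : ℝ} (hp : 0 ≤ p) (hx : 0 < x) (hy : 0 < y)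
    (h : (p - y) * (x - y) ≤ 0) :
    x ^ p * exp (-x) ≤ y ^ p * exp (-y) := by
  rw [rpow_def_of_pos hx, rpow_def_of_pos hy, ← exp_add, ← exp_add, exp_le_exp]
  have hlog : log x - log y ≤ x / y - 1 := by
    rw [← log_div hx.ne' hy.ne']
    exact log_le_sub_one_of_pos (div_pos hx hy)
  have hlin : p * (x / y - 1) ≤ x - y := by
    rw [div_sub_one hy.ne', ← mul_div_assoc, div_le_iff₀ hy]
    nlinarith
  nlinarith [mul_le_mul_of_nonneg_left hlog hp]

/-- The heat-kernel expression `σ^{-p} e^{-ρ²/(4σ)}` on the constraint curve `ρ² + σ = c`. -/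
noncomputable def heatProfile (p c σ : ℝ) : ℝ := σ ^ (-p) * exp (-(c - σ) / (4 * σ))

lemma rpow_neg_mul_exp_le_heatProfile {p c ρ σ : ℝ} (hσ : 0 < σ) (h : c ≤ ρ ^ 2 + σ) :
    σ ^ (-p) * exp (-ρ ^ 2 / (4 * σ)) ≤ heatProfile p c σ := by
  unfold heatProfile
  gcongr
  linarith

lemma heatProfile_eq {p c σ : ℝ} (hc : 0 < c) (hσ : 0 < σ) :
    heatProfile p c σ = exp (1 / 4) * (4 / c) ^ p * ((c / (4 * σ)) ^ p * exp (-(c / (4 * σ)))) := by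
  have hσc : σ ^ (-p) = (4 / c) ^ p * (c / (4 * σ)) ^ p := by
    rw [← mul_rpow (by positivity) (by positivity), rpow_neg hσ.le, ← inv_rpow hσ.le]
    congr 1
    field_simp
  have hexp : exp (-(c - σ) / (4 * σ)) = exp (1 / 4) * exp (-(c / (4 * σ))) := by
    rw [← exp_add]
    congr 1
    field_simp
    ring
  rw [heatProfile, hσc, hexp]
  ring

lemma heatProfile_le_heatProfile {p c σ τ : ℝ} (hp : 0 ≤ p) (hc : 0 < c) (hσ : 0 < σ)
    (hτ : 0 < τ) (h : (p - c / (4 * τ)) * (c / (4 * σ) - c / (4 * τ)) ≤ 0) :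
    heatProfile p c σ ≤ heatProfile p c τ := by
  rw [heatProfile_eq hc hσ, heatProfile_eq hc hτ]
  exact mul_le_mul_of_nonneg_left
    (rpow_mul_exp_neg_le_of_between hp (by positivity) (by positivity) h) (by positivity)

lemma heatProfile_le_heatProfile_right_endpoint {p a t σ : ℝ} (hp : 0 ≤ p) (hpa : 4 * p ≤ a)
    (ha : 0 < a) (ht : 0 < t) (hσ : 0 < σ) (hσt : σ ≤ t) :
    heatProfile p (a * t) σ ≤ heatProfile p (a * t) t := by
  refine heatProfile_le_heatProfile hp (by positivity) hσ ht ?_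
  have hx : a * t / (4 * t) ≤ a * t / (4 * σ) := by gcongr
  rw [show a * t / (4 * t) = a / 4 by field_simp] at hx ⊢
  nlinarith

lemma div_four_mul_div_four_mul {p c : ℝ} (hp : p ≠ 0) (hc : c ≠ 0) :
    c / (4 * (c / (4 * p))) = p := by
  field_simp

lemma heatProfile_le_heatProfile_peak {p c σ : ℝ} (hp : 0 < p) (hc : 0 < c) (hσ : 0 < σ) :
    heatProfile p c σ ≤ heatProfile p c (c / (4 * p)) := by
  refine heatProfile_le_heatProfile hp.le hc hσ (by positivity) ?_
  rw [div_four_mul_div_four_mul hp.ne' hc.ne', sub_self, zero_mul]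

lemma heatProfile_right_endpoint {p a t : ℝ} (ht : 0 < t) :
    heatProfile p (a * t) t = exp (1 / 4) * t ^ (-p) * exp (-a / 4) := by
  rw [heatProfile, mul_right_comm, ← exp_add, mul_comm]
  congr 2
  field_simp
  ring

lemma heatProfile_peak {p c : ℝ} (hp : 0 < p) (hc : 0 < c) :
    heatProfile p c (c / (4 * p)) = exp (1 / 4) * (4 * p / c) ^ p * exp (-p) := by
  rw [heatProfile_eq hc (by positivity), div_four_mul_div_four_mul hp.ne' hc.ne', mul_assoc,
    ← mul_assoc _ (p ^ p), ← mul_rpow (by positivity) hp.le, div_mul_eq_mul_div, mul_assoc]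

lemma isGreatest_heatProfile {p a b t τ : ℝ} (hab : a ≤ b) (ht : 0 < t) (hτ : 0 < τ)
    (hτt : τ ≤ t) (hτa : τ ≤ a * t)
    (hmax : ∀ σ, 0 < σ → σ ≤ t → heatProfile p (a * t) σ ≤ heatProfile p (a * t) τ) :
    IsGreatest
      {v : ℝ | ∃ ρ σ : ℝ, 0 ≤ ρ ∧ 0 < σ ∧ σ ≤ t ∧
        a * t ≤ ρ ^ 2 + σ ∧ ρ ^ 2 + σ ≤ b * t ∧
        v = σ ^ (-p) * exp (-ρ ^ 2 / (4 * σ))}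
      (heatProfile p (a * t) τ) := by
  have hρ : sqrt (a * t - τ) ^ 2 = a * t - τ := sq_sqrt (by linarith)
  refine ⟨⟨sqrt (a * t - τ), τ, sqrt_nonneg _, hτ, hτt, by linarith, ?_, ?_⟩, ?_⟩
  · nlinarith
  · rw [heatProfile, hρ]
  · rintro v ⟨ρ, σ, -, hσ, hσt, hc, -, rfl⟩
    exact (rpow_neg_mul_exp_le_heatProfile hσ hc).trans (hmax σ hσ hσt)

/-- the supremum of `σ^{-N/2} e^{-ρ²/(4σ)}` over
`{(ρ,σ) : ρ ≥ 0, 0 < σ ≤ t, at ≤ ρ² + σ ≤ bt}` is attained and equals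
`e^{1/4} t^{-N/2} e^{-a/4}` if `a/(2N) > 1`, and
`e^{1/4} (2N/(at))^{N/2} e^{-N/2}` if `a/(2N) ≤ 1`. -/
theorem stmt_4 (N : ℕ) (hN : 1 ≤ N) (a b t : ℝ) (ha : 0 < a) (hab : a < b) (ht : 0 < t) :
    IsGreatest
      {v : ℝ | ∃ ρ σ : ℝ, 0 ≤ ρ ∧ 0 < σ ∧ σ ≤ t ∧
        a * t ≤ ρ ^ 2 + σ ∧ ρ ^ 2 + σ ≤ b * t ∧
        v = σ ^ (-(N : ℝ) / 2) * Real.exp (-ρ ^ 2 / (4 * σ))}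
      (if 1 < a / (2 * N) then
        Real.exp (1 / 4) * t ^ (-(N : ℝ) / 2) * Real.exp (-a / 4)
      else
        Real.exp (1 / 4) * (2 * N / (a * t)) ^ ((N : ℝ) / 2) * Real.exp (-(N : ℝ) / 2)) := by
  have hN1 : (1 : ℝ) ≤ N := by exact_mod_cast hN
  have hN' : (0 : ℝ) < N / 2 := by positivity
  rw [show -(N : ℝ) / 2 = -((N : ℝ) / 2) from neg_div _ _]
  split_ifs with hcase
  · have hNa : 4 * ((N : ℝ) / 2) ≤ a := by
      rw [lt_div_iff₀ (by positivity)] at hcase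
      linarith
    rw [← heatProfile_right_endpoint ht]
    exact isGreatest_heatProfile hab.le ht ht le_rfl (by nlinarith)
      fun σ hσ hσt => heatProfile_le_heatProfile_right_endpoint hN'.le hNa ha ht hσ hσt
  · have hNa : a ≤ 4 * ((N : ℝ) / 2) := by
      rw [not_lt, div_le_one (by positivity)] at hcase
      linarith
    rw [show 2 * (N : ℝ) = 4 * (N / 2) by ring, ← heatProfile_peak hN' (mul_pos ha ht)]
    refine isGreatest_heatProfile hab.le ht (by positivity) ?_ ?_
      fun σ hσ _ => heatProfile_le_heatProfile_peak hN' (mul_pos ha ht) hσ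
    · rw [div_le_iff₀ (by positivity)]
      nlinarith
    · rw [div_le_iff₀ (by positivity)]
      nlinarith [mul_pos ha ht]
end

section
/- Let a > 0, b ∈ ℝ and κ > 0. Then there exists a constant C = C(a,b,κ) > 0 such that for all A > 0 and all B > κ/A, one has ∫_0^1 (1−x)^{−a} x^{−b} e^{−A²/(4(1−x))} e^{−B²/(4x)} dx ≤ C e^{−(A+B)²/4} A^{1−a} B^{1−b} (A+B)^{a+b−2}. -/
/-! Write `A = S (1 - y)`, `B = S y` with `S = A + B`. Then
`A² / (4 (1 - x)) + B² / (4 x) = S² / 4 + g(x)²` with `g(x) = S (x - y) / (2 √(x (1 - x)))`,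
an increasing function of `x ∈ (0, 1)`. Moving the powers `(1 - x)^(-a)`, `x^(-b)` to the saddle
point `y` costs a factor `exp (g² / 4)` each, because `p log t ≤ p² / ε + ε (log t)² / 4`,
`(log (x / y))² ≤ 4 (x - y)² / (x y)` and `AB > κ` allows `ε = κ / 16`. The integrand is then
a multiple of `g'(x) exp (-g(x)² / 2)`, whose integral is at most `√(2π)`. -/

open MeasureTheory Real Set

theorem abs_log_le_abs_sub_inv {s : ℝ} (hs : 0 < s) : |log s| ≤ |s - s⁻¹| := by
  rcases le_total 1 s with h | h
  · have : s⁻¹ ≤ 1 := inv_le_one_of_one_le₀ h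
    rw [abs_of_nonneg (log_nonneg h), abs_of_nonneg (by linarith)]
    linarith [log_le_sub_one_of_pos hs]
  · have : 1 ≤ s⁻¹ := one_le_inv_iff₀.2 ⟨hs, h⟩
    rw [abs_of_nonpos (log_nonpos hs.le h), abs_of_nonpos (by linarith)]
    linarith [log_le_sub_one_of_pos (inv_pos.2 hs), log_inv s]

theorem sq_log_div_le {x y : ℝ} (hx : 0 < x) (hy : 0 < y) :
    log (x / y) ^ 2 ≤ 4 * ((x - y) ^ 2 / (x * y)) := by
  set s := √(x / y)
  have hs : 0 < s := sqrt_pos.2 (div_pos hx hy)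
  have hs2 : s ^ 2 = x / y := sq_sqrt (div_pos hx hy).le
  have hlog : log (x / y) = 2 * log s := by rw [log_sqrt (div_pos hx hy).le]; ring
  have hsub : (s - s⁻¹) ^ 2 = (x - y) ^ 2 / (x * y) := by
    rw [sub_sq, inv_pow, hs2, mul_assoc, mul_inv_cancel₀ hs.ne']
    field_simp
    ring
  have := sq_le_sq.2 (abs_log_le_abs_sub_inv hs)
  rw [hlog, ← hsub]
  linarith

theorem div_rpow_le_exp {x y ε : ℝ} (p : ℝ) (hx : 0 < x) (hy : 0 < y) (hε : 0 < ε) :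
    (x / y) ^ p ≤ exp (p ^ 2 / ε + ε * ((x - y) ^ 2 / (x * y))) := by
  rw [rpow_def_of_pos (div_pos hx hy), exp_le_exp]
  have hlog := sq_log_div_le hx hy
  set L := log (x / y)
  have hyoung : L * p ≤ p ^ 2 / ε + ε * L ^ 2 / 4 := by
    rw [div_add_div _ _ hε.ne' four_ne_zero, le_div_iff₀ (by positivity)]
    nlinarith [sq_nonneg (2 * p - ε * L)]
  linarith [mul_le_mul_of_nonneg_left hlog hε.le]

theorem rpow_le_exp_mul_rpow_mul_rpow_mul_exp {x y ε : ℝ} (p q : ℝ) (hx : 0 < x) (hy : 0 < y)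
    (hε : 0 < ε) :
    x ^ q ≤ exp (p ^ 2 / ε) * y ^ p * x ^ (q - p) * exp (ε * ((x - y) ^ 2 / (x * y))) := by
  calc x ^ q = y ^ p * x ^ (q - p) * (x / y) ^ p := by
        rw [div_rpow hx.le hy.le, mul_assoc, mul_div_assoc', ← rpow_add hx, sub_add_cancel,
          mul_div_cancel₀ _ (rpow_pos_of_pos hy p).ne']
    _ ≤ y ^ p * x ^ (q - p) * exp (p ^ 2 / ε + ε * ((x - y) ^ 2 / (x * y))) := by
      gcongr
      exact div_rpow_le_exp p hx hy hε
    _ = _ := by rw [exp_add]; ring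

noncomputable def gaussianSubst (S y x : ℝ) : ℝ :=
  S / 2 * (x - y) * (x * (1 - x)) ^ (-(1 / 2 : ℝ))

noncomputable def gaussianSubstDeriv (S y x : ℝ) : ℝ :=
  S / 4 * (x + y - 2 * x * y) * (x * (1 - x)) ^ (-(3 / 2 : ℝ))

section gaussianSubst

variable {S y x : ℝ}

theorem hasDerivAt_gaussianSubst (hx : x ∈ Ioo 0 1) :
    HasDerivAt (gaussianSubst S y) (gaussianSubstDeriv S y x) x := by
  have hw : 0 < x * (1 - x) := mul_pos hx.1 (sub_pos.2 hx.2)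
  have hw' : HasDerivAt (fun t : ℝ => t * (1 - t)) (1 - 2 * x) x := by
    refine ((hasDerivAt_id x).mul ((hasDerivAt_const x 1).sub (hasDerivAt_id x))).congr_deriv ?_
    simp only [id_eq, Pi.sub_apply]
    ring
  have h := (((hasDerivAt_id x).sub_const y).const_mul (S / 2)).mul
    (hw'.rpow_const (p := -(1 / 2)) (Or.inl hw.ne'))
  refine h.congr_deriv ?_
  have hsplit : (x * (1 - x)) ^ (-(1 / 2 : ℝ)) = x * (1 - x) * (x * (1 - x)) ^ (-(3 / 2 : ℝ)) := by
    rw [← rpow_one_add' hw.le (by norm_num)]; norm_num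
  rw [gaussianSubstDeriv, hsplit, show -(1 / 2 : ℝ) - 1 = -(3 / 2) by norm_num]
  simp only [id]
  ring

theorem gaussianSubst_sq (hx : x ∈ Ioo 0 1) :
    gaussianSubst S y x ^ 2 = S ^ 2 * (x - y) ^ 2 / (4 * (x * (1 - x))) := by
  have hw : 0 < x * (1 - x) := mul_pos hx.1 (sub_pos.2 hx.2)
  have hinv : ((x * (1 - x)) ^ (-(1 / 2 : ℝ))) ^ 2 = (x * (1 - x))⁻¹ := by
    rw [← rpow_natCast, ← rpow_mul hw.le]
    norm_num [rpow_neg_one]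
  rw [gaussianSubst, mul_pow, hinv]
  field_simp
  ring

theorem gaussianSubstDeriv_pos (hS : 0 < S) (hy : y ∈ Ioo 0 1) (hx : x ∈ Ioo 0 1) :
    0 < gaussianSubstDeriv S y x := by
  have hw : 0 < x * (1 - x) := mul_pos hx.1 (sub_pos.2 hx.2)
  have : 0 < x + y - 2 * x * y := by nlinarith [mul_pos hx.1 (sub_pos.2 hy.2), hy.1, hx.2]
  unfold gaussianSubstDeriv
  positivity

theorem strictMonoOn_gaussianSubst (hS : 0 < S) (hy : y ∈ Ioo 0 1) :
    StrictMonoOn (gaussianSubst S y) (Ioo 0 1) := by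
  refine strictMonoOn_of_deriv_pos (convex_Ioo 0 1)
    (fun x hx => (hasDerivAt_gaussianSubst hx).continuousAt.continuousWithinAt) fun x hx => ?_
  rw [interior_Ioo] at hx
  rw [(hasDerivAt_gaussianSubst hx).deriv]
  exact gaussianSubstDeriv_pos hS hy hx

end gaussianSubst

theorem setIntegral_abs_deriv_mul_comp_le {s : Set ℝ} {g g' f : ℝ → ℝ} (hs : MeasurableSet s)
    (hg : ∀ x ∈ s, HasDerivWithinAt g (g' x) s x) (hinj : InjOn g s) (hf : Integrable f)
    (hf₀ : 0 ≤ f) :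
    ∫ x in s, |g' x| * f (g x) ≤ ∫ u, f u := by
  have h := integral_image_eq_integral_abs_deriv_smul hs hg hinj f
  simp only [smul_eq_mul] at h
  rw [← h]
  exact setIntegral_le_integral hf (.of_forall hf₀)

theorem integral_exp_neg_sq_div_two : ∫ u : ℝ, exp (-u ^ 2 / 2) = √(2 * π) := by
  simp_rw [neg_div, div_eq_inv_mul, ← neg_mul]
  rw [integral_gaussian, div_inv_eq_mul, mul_comm]

theorem integrable_exp_neg_sq_div_two : Integrable fun u : ℝ => exp (-u ^ 2 / 2) := by
  simp_rw [neg_div, div_eq_inv_mul, ← neg_mul]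
  exact integrable_exp_neg_mul_sq (by norm_num)

noncomputable def heatConvIntegrand (a b A B x : ℝ) : ℝ :=
  (1 - x) ^ (-a) * x ^ (-b) * exp (-A ^ 2 / (4 * (1 - x))) * exp (-B ^ 2 / (4 * x))

theorem kappa_mul_sq_div_le {κ S x x' y y' : ℝ} (d : ℝ) (hx : 0 < x) (hx' : 0 < x')
    (hx'₁ : x' ≤ 1) (hy : 0 < y) (hy'₁ : y' ≤ 1) (hκ : 0 ≤ κ) (hκS : κ ≤ S ^ 2 * (y * y')) :
    κ / 16 * (d ^ 2 / (x * y)) ≤ S ^ 2 * d ^ 2 / (4 * (x * x')) / 4 := by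
  have hκx' : κ * x' ≤ S ^ 2 * y := by
    nlinarith [mul_le_mul_of_nonneg_left hy'₁ (by positivity : 0 ≤ S ^ 2 * y)]
  calc κ / 16 * (d ^ 2 / (x * y)) = κ * x' * d ^ 2 / (16 * (x * y * x')) := by
        field_simp
    _ ≤ S ^ 2 * y * d ^ 2 / (16 * (x * y * x')) := by gcongr
    _ = S ^ 2 * d ^ 2 / (4 * (x * x')) / 4 := by field_simp; ring

theorem rpow_neg_three_halves_le_gaussianSubstDeriv {S y x : ℝ} (hS : 0 < S) (hy : y ∈ Ioo 0 1)
    (hx : x ∈ Ioo 0 1) :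
    (1 - x) ^ (-(3 / 2 : ℝ)) * x ^ (-(3 / 2 : ℝ)) ≤
      4 / (S * (y * (1 - y))) * gaussianSubstDeriv S y x := by
  obtain ⟨hx₀, hx₁⟩ := hx
  obtain ⟨hy₀, hy₁⟩ := hy
  have hyy : 0 < y * (1 - y) := mul_pos hy₀ (sub_pos.2 hy₁)
  have hlow : y * (1 - y) ≤ x + y - 2 * x * y := by nlinarith [sq_nonneg (x - y)]
  rw [← mul_rpow (sub_pos.2 hx₁).le hx₀.le, gaussianSubstDeriv, mul_comm (1 - x) x]
  calc (x * (1 - x)) ^ (-(3 / 2 : ℝ))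
      = y * (1 - y) / (y * (1 - y)) * (x * (1 - x)) ^ (-(3 / 2 : ℝ)) := by
        rw [div_self hyy.ne', one_mul]
    _ ≤ (x + y - 2 * x * y) / (y * (1 - y)) * (x * (1 - x)) ^ (-(3 / 2 : ℝ)) := by gcongr
    _ = _ := by field_simp

theorem heatConvIntegrand_le {a b κ S y x : ℝ} (hκ : 0 < κ) (hS : 0 < S) (hy : y ∈ Ioo 0 1)
    (hκS : κ ≤ S ^ 2 * (y * (1 - y))) (hx : x ∈ Ioo 0 1) :
    heatConvIntegrand a b (S * (1 - y)) (S * y) x ≤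
      exp ((3 / 2 - a) ^ 2 / (κ / 16)) * exp ((3 / 2 - b) ^ 2 / (κ / 16)) *
        ((1 - y) ^ (3 / 2 - a) * y ^ (3 / 2 - b)) * (4 / (S * (y * (1 - y)))) * exp (-S ^ 2 / 4) *
        (|gaussianSubstDeriv S y x| * exp (-gaussianSubst S y x ^ 2 / 2)) := by
  obtain ⟨hx₀, hx₁⟩ := hx
  obtain ⟨hy₀, hy₁⟩ := hy
  have hx' : 0 < 1 - x := sub_pos.2 hx₁
  have hy' : 0 < 1 - y := sub_pos.2 hy₁
  have hexp : exp (-(S * (1 - y)) ^ 2 / (4 * (1 - x))) * exp (-(S * y) ^ 2 / (4 * x)) =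
      exp (-S ^ 2 / 4) * exp (-(S ^ 2 * (x - y) ^ 2 / (4 * (x * (1 - x))))) := by
    rw [← exp_add, ← exp_add]
    congr 1
    field_simp
    ring
  set E := S ^ 2 * (x - y) ^ 2 / (4 * (x * (1 - x)))
  have hE : exp (E / 4) * exp (E / 4) * exp (-E) = exp (-E / 2) := by
    rw [← exp_add, ← exp_add]
    congr 1
    ring
  have hxb : x ^ (-b) ≤
      exp ((3 / 2 - b) ^ 2 / (κ / 16)) * y ^ (3 / 2 - b) * x ^ (-(3 / 2 : ℝ)) * exp (E / 4) := by
    have h := rpow_le_exp_mul_rpow_mul_rpow_mul_exp (ε := κ / 16) (3 / 2 - b) (-b) hx₀ hy₀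
      (by positivity)
    rw [show -b - (3 / 2 - b) = -(3 / 2 : ℝ) by ring] at h
    refine h.trans ?_
    gcongr
    exact kappa_mul_sq_div_le _ hx₀ hx' (by linarith) hy₀ (by linarith) hκ.le hκS
  have hxa : (1 - x) ^ (-a) ≤ exp ((3 / 2 - a) ^ 2 / (κ / 16)) * (1 - y) ^ (3 / 2 - a) *
      (1 - x) ^ (-(3 / 2 : ℝ)) * exp (E / 4) := by
    have h := rpow_le_exp_mul_rpow_mul_rpow_mul_exp (ε := κ / 16) (3 / 2 - a) (-a) hx' hy'
      (by positivity)
    rw [show -a - (3 / 2 - a) = -(3 / 2 : ℝ) by ring] at h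
    refine h.trans ?_
    gcongr
    have h := kappa_mul_sq_div_le (S := S) (1 - x - (1 - y)) hx' hx₀ hx₁.le hy' hy₁.le hκ.le
      (by linarith)
    exact h.trans_eq (by simp only [E]; ring)
  have hjac := rpow_neg_three_halves_le_gaussianSubstDeriv hS ⟨hy₀, hy₁⟩ ⟨hx₀, hx₁⟩
  calc heatConvIntegrand a b (S * (1 - y)) (S * y) x
      = (1 - x) ^ (-a) * x ^ (-b) * (exp (-S ^ 2 / 4) * exp (-E)) := by
        rw [heatConvIntegrand, mul_assoc, hexp]
    _ ≤ (exp ((3 / 2 - a) ^ 2 / (κ / 16)) * (1 - y) ^ (3 / 2 - a) * (1 - x) ^ (-(3 / 2 : ℝ)) *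
          exp (E / 4)) *
        (exp ((3 / 2 - b) ^ 2 / (κ / 16)) * y ^ (3 / 2 - b) * x ^ (-(3 / 2 : ℝ)) * exp (E / 4)) *
        (exp (-S ^ 2 / 4) * exp (-E)) := by gcongr
    _ = exp ((3 / 2 - a) ^ 2 / (κ / 16)) * exp ((3 / 2 - b) ^ 2 / (κ / 16)) *
          ((1 - y) ^ (3 / 2 - a) * y ^ (3 / 2 - b)) *
          ((1 - x) ^ (-(3 / 2 : ℝ)) * x ^ (-(3 / 2 : ℝ))) * exp (-S ^ 2 / 4) * exp (-E / 2) := by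
        rw [← hE]
        ring
    _ ≤ exp ((3 / 2 - a) ^ 2 / (κ / 16)) * exp ((3 / 2 - b) ^ 2 / (κ / 16)) *
          ((1 - y) ^ (3 / 2 - a) * y ^ (3 / 2 - b)) *
          (4 / (S * (y * (1 - y))) * |gaussianSubstDeriv S y x|) * exp (-S ^ 2 / 4) *
          exp (-E / 2) := by
        gcongr _ * _ * ?_ * _ * _
        exact hjac.trans (by gcongr; exact le_abs_self _)
    _ = _ := by
        rw [gaussianSubst_sq ⟨hx₀, hx₁⟩]
        ring

theorem rpow_mul_rpow_mul_div_le {κ S y : ℝ} (a b : ℝ) (hκ : 0 < κ) (hS : 0 < S)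
    (hy : y ∈ Ioo 0 1) (hκS : κ ≤ S ^ 2 * (y * (1 - y))) :
    (1 - y) ^ (3 / 2 - a) * y ^ (3 / 2 - b) * (4 / (S * (y * (1 - y)))) ≤
      4 / √κ * ((1 - y) ^ (1 - a) * y ^ (1 - b)) := by
  obtain ⟨hy₀, hy₁⟩ := hy
  have hy' : 0 < 1 - y := sub_pos.2 hy₁
  have hw : 0 < y * (1 - y) := mul_pos hy₀ hy'
  have hsplit : (1 - y) ^ (3 / 2 - a) * y ^ (3 / 2 - b) =
      (1 - y) ^ (1 - a) * y ^ (1 - b) * √(y * (1 - y)) := by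
    rw [show 3 / 2 - a = 1 - a + 1 / 2 by ring, show 3 / 2 - b = 1 - b + 1 / 2 by ring,
      rpow_add hy', rpow_add hy₀, sqrt_eq_rpow, mul_rpow hy₀.le hy'.le]
    ring
  have hroot : √κ * √(y * (1 - y)) ≤ S * (y * (1 - y)) := by
    rw [← sqrt_mul hκ.le, ← sqrt_sq (by positivity : 0 ≤ S * (y * (1 - y)))]
    exact sqrt_le_sqrt (by nlinarith)
  rw [hsplit, mul_assoc, mul_comm (4 / √κ)]
  gcongr
  rw [mul_div_assoc', div_le_div_iff₀ (by positivity) (by positivity)]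
  nlinarith

theorem integral_heatConvIntegrand_le {a b κ S y : ℝ} (hκ : 0 < κ) (hS : 0 < S)
    (hy : y ∈ Ioo 0 1) (hκS : κ ≤ S ^ 2 * (y * (1 - y))) :
    ∫ x in Ioo 0 1, heatConvIntegrand a b (S * (1 - y)) (S * y) x ≤
      4 * √(2 * π) / √κ * (exp ((3 / 2 - a) ^ 2 / (κ / 16)) * exp ((3 / 2 - b) ^ 2 / (κ / 16))) *
        exp (-S ^ 2 / 4) * ((1 - y) ^ (1 - a) * y ^ (1 - b)) := by
  set K := exp ((3 / 2 - a) ^ 2 / (κ / 16)) * exp ((3 / 2 - b) ^ 2 / (κ / 16))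
  set c := K * ((1 - y) ^ (3 / 2 - a) * y ^ (3 / 2 - b)) * (4 / (S * (y * (1 - y)))) *
    exp (-S ^ 2 / 4)
  have hc : 0 < c := by
    have : 0 < y := hy.1
    have : 0 < 1 - y := sub_pos.2 hy.2
    positivity
  have hderiv : ∀ x ∈ Ioo (0 : ℝ) 1,
      HasDerivWithinAt (gaussianSubst S y) (gaussianSubstDeriv S y x) (Ioo 0 1) x :=
    fun x hx => (hasDerivAt_gaussianSubst hx).hasDerivWithinAt
  have hinj := (strictMonoOn_gaussianSubst hS hy).injOn
  have hint : IntegrableOn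
      (fun x => |gaussianSubstDeriv S y x| * exp (-gaussianSubst S y x ^ 2 / 2)) (Ioo 0 1) := by
    simpa only [smul_eq_mul] using (integrableOn_image_iff_integrableOn_abs_deriv_smul
      measurableSet_Ioo hderiv hinj _).1 integrable_exp_neg_sq_div_two.integrableOn
  have hnonneg : ∀ x ∈ Ioo (0 : ℝ) 1, 0 ≤ heatConvIntegrand a b (S * (1 - y)) (S * y) x := by
    intro x hx
    have : 0 < 1 - x := sub_pos.2 hx.2
    have : 0 < x := hx.1
    unfold heatConvIntegrand
    positivity
  calc ∫ x in Ioo 0 1, heatConvIntegrand a b (S * (1 - y)) (S * y) x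
      ≤ ∫ x in Ioo 0 1,
          c * (|gaussianSubstDeriv S y x| * exp (-gaussianSubst S y x ^ 2 / 2)) :=
        setIntegral_mono_of_nonneg hnonneg (fun x hx => heatConvIntegrand_le hκ hS hy hκS hx)
          (hint.const_mul c)
    _ = c * ∫ x in Ioo 0 1, |gaussianSubstDeriv S y x| * exp (-gaussianSubst S y x ^ 2 / 2) :=
        integral_const_mul c _
    _ ≤ c * √(2 * π) := by
        rw [← integral_exp_neg_sq_div_two]
        exact mul_le_mul_of_nonneg_left (setIntegral_abs_deriv_mul_comp_le measurableSet_Ioo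
          hderiv hinj integrable_exp_neg_sq_div_two fun u => (exp_pos _).le) hc.le
    _ = K * exp (-S ^ 2 / 4) * √(2 * π) *
          ((1 - y) ^ (3 / 2 - a) * y ^ (3 / 2 - b) * (4 / (S * (y * (1 - y))))) := by ring
    _ ≤ K * exp (-S ^ 2 / 4) * √(2 * π) * (4 / √κ * ((1 - y) ^ (1 - a) * y ^ (1 - b))) :=
        mul_le_mul_of_nonneg_left (rpow_mul_rpow_mul_div_le a b hκ hS hy hκS) (by positivity)
    _ = _ := by ring

theorem stmt_9_general (a b κ : ℝ) (hκ : 0 < κ) :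
    ∃ C : ℝ, 0 < C ∧
      ∀ A B : ℝ, 0 < A → κ / A < B →
        (∫ x in Set.Ioo (0 : ℝ) 1,
            (1 - x) ^ (-a) * x ^ (-b) * Real.exp (-A ^ 2 / (4 * (1 - x))) *
              Real.exp (-B ^ 2 / (4 * x))) ≤
          C * Real.exp (-(A + B) ^ 2 / 4) * A ^ (1 - a) * B ^ (1 - b) *
            (A + B) ^ (a + b - 2) := by
  refine ⟨4 * √(2 * π) / √κ * (exp ((3 / 2 - a) ^ 2 / (κ / 16)) *
    exp ((3 / 2 - b) ^ 2 / (κ / 16))), by positivity, fun A B hA hBA => ?_⟩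
  have hB : 0 < B := (div_pos hκ hA).trans hBA
  have hAB : κ < A * B := (div_lt_iff₀' hA).1 hBA
  obtain ⟨S, y, hS, hy, rfl, rfl⟩ :
      ∃ S y, 0 < S ∧ y ∈ Ioo (0 : ℝ) 1 ∧ A = S * (1 - y) ∧ B = S * y :=
    ⟨A + B, B / (A + B), by positivity,
      ⟨by positivity, (div_lt_one (by positivity)).2 (by linarith)⟩, by field_simp; ring,
      by field_simp⟩
  have hy' : 0 < 1 - y := sub_pos.2 hy.2
  have hscale : (S * (1 - y)) ^ (1 - a) * (S * y) ^ (1 - b) * S ^ (a + b - 2) =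
      (1 - y) ^ (1 - a) * y ^ (1 - b) := by
    rw [mul_rpow hS.le hy'.le, mul_rpow hS.le hy.1.le]
    have : S ^ (1 - a) * S ^ (1 - b) * S ^ (a + b - 2) = 1 := by
      rw [← rpow_add hS, ← rpow_add hS, show 1 - a + (1 - b) + (a + b - 2) = 0 by ring, rpow_zero]
    linear_combination ((1 - y) ^ (1 - a) * y ^ (1 - b)) * this
  rw [show S * (1 - y) + S * y = S by ring]
  calc _ ≤ _ := integral_heatConvIntegrand_le hκ hS hy (by linarith)
    _ = _ := by rw [← hscale]; ring

/-- for `a > 0`, `b ∈ ℝ`, `κ > 0`, there is `C = C(a,b,κ) > 0` such that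
for all `A > 0`, `B > κ/A`,
`∫₀¹ (1-x)^{-a} x^{-b} e^{-A²/(4(1-x))} e^{-B²/(4x)} dx
  ≤ C e^{-(A+B)²/4} A^{1-a} B^{1-b} (A+B)^{a+b-2}`. -/
theorem stmt_9 (a b κ : ℝ) (ha : 0 < a) (hκ : 0 < κ) :
    ∃ C : ℝ, 0 < C ∧
      ∀ A B : ℝ, 0 < A → κ / A < B →
        (∫ x in Set.Ioo (0 : ℝ) 1,
            (1 - x) ^ (-a) * x ^ (-b) * Real.exp (-A ^ 2 / (4 * (1 - x))) *
              Real.exp (-B ^ 2 / (4 * x))) ≤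
          C * Real.exp (-(A + B) ^ 2 / 4) * A ^ (1 - a) * B ^ (1 - b) *
            (A + B) ^ (a + b - 2) :=
  stmt_9_general a b κ hκ
end

section
/- Let α, β, γ, δ be real numbers with γ > 1 and δ > 0, and let ℓ ≥ 2 be an integer. Then there exists a constant C > 0 such that for every integer n > ℓ, ∑_{p=1}^{n−ℓ} p^α (√n − √p)^β e^{−δ(√p + √γ(√n − √(p+1)))²} ≤ C n^{α − β/2} e^{−δ n}. -/
/-! Put `k = n - p` and `w = √γ > 1`. Completing squares gives
`(√p + w (√n - √(p+1)))² ≥ n + (w - 1)/2 · k - C`, so every summand carries the factor `e^{-δn}`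
times a geometrically decaying factor `e^{-δ (w - 1) k / 2}`. Writing the algebraic part as
`p^α (√n - √p)^β = n^{α - β/2} (p/n)^α (√n (√n - √p))^β` with both bases in `[1/(2k), 2k]`
bounds it by `(2k)^{|α|+|β|} n^{α - β/2}`, and `∑ k^{|α|+|β|} e^{-εk}` converges. -/

open Real Finset Filter Asymptotics

theorem sq_add_mul_sub_lower_bound {w s s' t : ℝ} (hw : 1 < w) (hs : 1 ≤ s) (hs'0 : 0 ≤ s')
    (hs' : s' ^ 2 = s ^ 2 + 1) (ht0 : 0 ≤ t) (ht : s' ^ 2 + 1 ≤ t ^ 2) :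
    t ^ 2 + (w - 1) / 2 * (t ^ 2 - s ^ 2) ≤
      (s + w * (t - s')) ^ 2 + (1 + (2 * w - 1) ^ 2 / (4 * w * (w - 1))) := by
  -- With `u = t - s'`, both `(s + w u)² - t²` and `t² - s²` are quadratic in `u`; the slope
  -- `(w - 1)/2` cancels their `s u` terms, leaving `w (w - 1) u² - (2w - 1) u - 1`.
  set u := t - s' with hu_def
  have hu : 0 ≤ u := by nlinarith
  have hs's : s' ≤ s + 1 := by nlinarith
  have hgap : 2 * (s' - s) ≤ 1 := by nlinarith
  have hut : 1 ≤ u * (t + s') := by nlinarith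
  have hNP : t ^ 2 - s ^ 2 ≤ 2 * u * (2 * s + 2 + u) := by nlinarith
  have hexpand : (s + w * u) ^ 2 - t ^ 2 =
      2 * (w - 1) * s * u - 2 * (s' - s) * u + (w ^ 2 - 1) * u ^ 2 - 1 := by
    rw [hu_def]; linear_combination -hs'
  have hww : 0 < 4 * w * (w - 1) := by nlinarith
  have hquad :
      -((2 * w - 1) ^ 2 / (4 * w * (w - 1))) ≤ w * (w - 1) * u ^ 2 - (2 * w - 1) * u := by
    rw [neg_le, le_div_iff₀ hww]
    nlinarith [sq_nonneg (2 * w * (w - 1) * u - (2 * w - 1))]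
  nlinarith [mul_le_mul_of_nonneg_left hNP (by linarith : (0:ℝ) ≤ (w - 1) / 2),
    mul_le_mul_of_nonneg_left hgap hu]

theorem rpow_le_rpow_abs_of_inv_le_of_le {x R : ℝ} (α : ℝ) (hx : 0 < x) (hRx : R⁻¹ ≤ x)
    (hxR : x ≤ R) : x ^ α ≤ R ^ |α| := by
  have hR0 : 0 < R := hx.trans_le hxR
  have hR : 1 ≤ R := by
    by_contra! h
    linarith [one_lt_inv_iff₀.mpr ⟨hR0, h⟩]
  rcases le_or_gt 0 α with hα | hα
  · calc x ^ α ≤ R ^ α := rpow_le_rpow hx.le hxR hα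
      _ ≤ R ^ |α| := rpow_le_rpow_of_exponent_le hR (le_abs_self α)
  · calc x ^ α = x⁻¹ ^ (-α) := by rw [inv_rpow hx.le, rpow_neg hx.le, inv_inv]
      _ ≤ R ^ (-α) := rpow_le_rpow (by positivity) (inv_le_of_inv_le₀ hR0 hRx) (by linarith)
      _ = R ^ |α| := by rw [abs_of_neg hα]

theorem rpow_mul_sqrt_sub_rpow_le (α β : ℝ) {N P : ℝ} (hP : 1 ≤ P) (hPN : P + 1 ≤ N) :
    P ^ α * (√N - √P) ^ β ≤ 2 ^ (|α| + |β|) * (N - P) ^ (|α| + |β|) * N ^ (α - β / 2) := by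
  have hN : 0 < N := by linarith
  have hk : 1 ≤ N - P := by linarith
  have hsN : √N ^ 2 = N := sq_sqrt hN.le
  have hsP : √P ^ 2 = P := sq_sqrt (by linarith)
  have hsPN : √P < √N := sqrt_lt_sqrt (by linarith) (by linarith)
  have hsP0 : 0 ≤ √P := sqrt_nonneg P
  set x := √N * (√N - √P) with hx_def
  have hx0 : 0 < x := mul_pos (sqrt_pos.mpr hN) (by linarith)
  have hxk : x * (√N + √P) = √N * (N - P) := by
    rw [hx_def]; linear_combination √N * (hsN - hsP)
  have hx_le : x ≤ 2 * (N - P) := by nlinarith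
  have hx_ge : (2 * (N - P))⁻¹ ≤ x := by
    rw [inv_le_iff_one_le_mul₀ (by linarith)]; nlinarith
  have hPN_le : P / N ≤ 2 * (N - P) := by
    rw [div_le_iff₀ hN]; nlinarith
  have hPN_ge : (2 * (N - P))⁻¹ ≤ P / N := by
    rw [inv_le_iff_one_le_mul₀ (by linarith), div_mul_eq_mul_div, le_div_iff₀ hN]; nlinarith
  have hPα : P ^ α = N ^ α * (P / N) ^ α := by
    rw [← mul_rpow hN.le (by positivity), mul_div_cancel₀ _ hN.ne']
  have hsubβ : (√N - √P) ^ β = N ^ (-(β / 2)) * x ^ β := by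
    have hsqrt : √N ^ β = N ^ (β / 2) := by
      rw [sqrt_eq_rpow, ← rpow_mul hN.le]; ring_nf
    rw [hx_def, mul_rpow (sqrt_nonneg N) (by linarith), hsqrt, ← mul_assoc, ← rpow_add hN]
    simp
  calc P ^ α * (√N - √P) ^ β = N ^ α * N ^ (-(β / 2)) * ((P / N) ^ α * x ^ β) := by
        rw [hPα, hsubβ]; ring
    _ ≤ N ^ α * N ^ (-(β / 2)) * ((2 * (N - P)) ^ |α| * (2 * (N - P)) ^ |β|) := by
        gcongr
        · exact rpow_le_rpow_abs_of_inv_le_of_le α (by positivity) hPN_ge hPN_le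
        · exact rpow_le_rpow_abs_of_inv_le_of_le β hx0 hx_ge hx_le
    _ = 2 ^ (|α| + |β|) * (N - P) ^ (|α| + |β|) * N ^ (α - β / 2) := by
        rw [← rpow_add hN, ← rpow_add (by linarith), ← sub_eq_add_neg, mul_comm,
          mul_rpow zero_le_two (by linarith)]

theorem summable_rpow_mul_exp_neg_nat_mul (s : ℝ) {r : ℝ} (hr : 0 < r) :
    Summable fun n : ℕ ↦ (n : ℝ) ^ s * exp (-r * n) := by
  have hsmall := (isLittleO_rpow_exp_pos_mul_atTop s (half_pos hr)).comp_tendsto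
    tendsto_natCast_atTop_atTop
  refine summable_of_isBigO_nat (g := fun n : ℕ ↦ exp (n * -(r / 2))) ?_ ?_
  · exact summable_exp_nat_mul_iff.mpr (by linarith)
  · refine (hsmall.isBigO.mul (isBigO_refl (fun n : ℕ ↦ exp (-r * n)) atTop)).congr_right ?_
    intro n
    simp only [Function.comp_apply, ← exp_add]
    ring_nf

theorem sum_comp_sub_le_tsum {f : ℕ → ℝ} (hf : Summable f) (hf0 : ∀ k, 0 ≤ f k) {n : ℕ}
    (s : Finset ℕ) (hs : ∀ p ∈ s, p ≤ n) : ∑ p ∈ s, f (n - p) ≤ ∑' k, f k := by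
  rw [← sum_image (g := (n - ·)) fun p hp q hq h ↦ by
    have := hs p hp; have := hs q hq; simp only at h; omega]
  exact hf.sum_le_tsum _ fun k _ ↦ hf0 k

theorem exists_lower_bound_sq_sqrt_add_mul {γ : ℝ} (hγ : 1 < γ) :
    ∃ c > 0, ∃ C, ∀ N P : ℝ, 1 ≤ P → P + 2 ≤ N →
      N + c * (N - P) - C ≤ (√P + √γ * (√N - √(P + 1))) ^ 2 := by
  have hw : 1 < √γ := by simpa using sqrt_lt_sqrt zero_le_one hγ
  refine ⟨(√γ - 1) / 2, by linarith, 1 + (2 * √γ - 1) ^ 2 / (4 * √γ * (√γ - 1)),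
    fun N P hP hPN ↦ ?_⟩
  have h := sq_add_mul_sub_lower_bound (t := √N) hw (one_le_sqrt.mpr hP) (sqrt_nonneg (P + 1))
    (by rw [sq_sqrt (by linarith), sq_sqrt (by linarith)]) (sqrt_nonneg N)
    (by rw [sq_sqrt (by linarith), sq_sqrt (by linarith)]; linarith)
  rw [sq_sqrt (by linarith), sq_sqrt (by linarith)] at h
  linarith

theorem rpow_mul_rpow_mul_exp_le {α β δ c C N P f : ℝ} (hδ : 0 ≤ δ) (hP : 1 ≤ P)
    (hPN : P + 1 ≤ N) (hf : N + c * (N - P) - C ≤ f) :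
    P ^ α * (√N - √P) ^ β * exp (-δ * f) ≤
      exp (δ * C) * 2 ^ (|α| + |β|) *
        ((N - P) ^ (|α| + |β|) * exp (-(δ * c) * (N - P))) * (N ^ (α - β / 2) * exp (-δ * N)) := by
  have hexp : exp (-δ * f) ≤ exp (δ * C) * exp (-(δ * c) * (N - P)) * exp (-δ * N) := by
    rw [← exp_add, ← exp_add, exp_le_exp]
    nlinarith
  calc P ^ α * (√N - √P) ^ β * exp (-δ * f)
      ≤ 2 ^ (|α| + |β|) * (N - P) ^ (|α| + |β|) * N ^ (α - β / 2) *
          (exp (δ * C) * exp (-(δ * c) * (N - P)) * exp (-δ * N)) := by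
        refine mul_le_mul (rpow_mul_sqrt_sub_rpow_le α β hP hPN) hexp (by positivity) ?_
        have := rpow_nonneg (by linarith : 0 ≤ N - P) (|α| + |β|)
        have := rpow_nonneg (by linarith : 0 ≤ N) (α - β / 2)
        positivity
    _ = _ := by ring

/-- for reals `α, β, γ, δ` with `γ > 1`, `δ > 0` and an integer `ℓ ≥ 2`,
there is `C > 0` such that for every integer `n > ℓ`,
`∑_{p=1}^{n-ℓ} p^α (√n - √p)^β e^{-δ(√p + √γ(√n - √(p+1)))²} ≤ C n^{α-β/2} e^{-δn}`. -/
theorem stmt_11 (α β γ δ : ℝ) (hγ : 1 < γ) (hδ : 0 < δ) (ℓ : ℕ) (hℓ : 2 ≤ ℓ) :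
    ∃ C : ℝ, 0 < C ∧
      ∀ n : ℕ, ℓ < n →
        (∑ p ∈ Finset.Icc 1 (n - ℓ),
            (p : ℝ) ^ α * (Real.sqrt n - Real.sqrt p) ^ β *
              Real.exp (-δ * (Real.sqrt p +
                Real.sqrt γ * (Real.sqrt n - Real.sqrt ((p : ℝ) + 1))) ^ 2)) ≤
          C * (n : ℝ) ^ (α - β / 2) * Real.exp (-δ * n) := by
  obtain ⟨c, hc, C, hsq⟩ := exists_lower_bound_sq_sqrt_add_mul hγ
  set s := |α| + |β|
  set g : ℕ → ℝ := fun k ↦ (k : ℝ) ^ s * exp (-(δ * c) * k)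
  have hg : Summable g := summable_rpow_mul_exp_neg_nat_mul s (by positivity)
  have hg0 : ∀ k, 0 ≤ g k := fun k ↦ by positivity
  have hS : 0 < ∑' k, g k := hg.tsum_pos hg0 1 (by positivity)
  refine ⟨exp (δ * C) * 2 ^ s * ∑' k, g k, by positivity, fun n hn ↦ ?_⟩
  calc _ ≤ ∑ p ∈ Icc 1 (n - ℓ),
          exp (δ * C) * 2 ^ s * g (n - p) * (n ^ (α - β / 2) * exp (-δ * n)) := by
        refine sum_le_sum fun p hp ↦ ?_
        obtain ⟨hp1, hpn⟩ := mem_Icc.mp hp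
        have hP : (1 : ℝ) ≤ p := by exact_mod_cast hp1
        have hPN : (p : ℝ) + 2 ≤ n := by exact_mod_cast (by omega : p + 2 ≤ n)
        simp only [g, Nat.cast_sub (by omega : p ≤ n)]
        exact rpow_mul_rpow_mul_exp_le hδ.le hP (by linarith) (hsq n p hP hPN)
    _ = exp (δ * C) * 2 ^ s * (∑ p ∈ Icc 1 (n - ℓ), g (n - p)) *
          (n ^ (α - β / 2) * exp (-δ * n)) := by
        rw [← sum_mul, ← mul_sum]
    _ ≤ exp (δ * C) * 2 ^ s * (∑' k, g k) * (n ^ (α - β / 2) * exp (-δ * n)) := by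
        gcongr
        exact sum_comp_sub_le_tsum hg hg0 _ fun p hp ↦ by have := (mem_Icc.mp hp).2; omega
    _ = _ := by ring
end

section
/- Let α > 0 be a real number and let d ≥ 1 and n ≥ 0 be integers. Then ∑_{k=0}^{n} (n+1−k)^d e^{kα} ≤ (d e^α / (e^α − 1)) ∑_{k=0}^{n} (n+1−k)^{d−1} e^{kα}. -/
/-!
Write `q = e^α > 1` and `a_k = n + 1 - k`. Summation by parts gives
`(q - 1) ∑ a_k^d q^k = ∑ (a_k^d - a_{k+1}^d) q^{k+1} - a_0^d` (the boundary term at `k = n + 1`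
vanishes because `a_{n+1} = 0` and `d ≥ 1`), and each difference `(x + 1)^d - x^d` with `x ≥ 0`
is at most `d (x + 1)^(d - 1)` by the mean value bound.
-/

open Real Finset

theorem sub_one_mul_sum_mul_pow {R : Type*} [CommRing R] (b : ℕ → R) (q : R) (N : ℕ) :
    (q - 1) * ∑ k ∈ range N, b k * q ^ k =
      ∑ k ∈ range N, (b k - b (k + 1)) * q ^ (k + 1) + b N * q ^ N - b 0 := by
  induction N with
  | zero => simp
  | succ N ih =>
    rw [sum_range_succ, sum_range_succ, mul_add, ih]
    ring

section OrderedField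

variable {K : Type*} [Field K] [LinearOrder K] [IsStrictOrderedRing K]

theorem add_one_pow_sub_pow_le {x : K} (hx : 0 ≤ x) (d : ℕ) :
    (x + 1) ^ d - x ^ d ≤ d * (x + 1) ^ (d - 1) := by
  have hx1 : 0 ≤ x + 1 := by linarith
  calc (x + 1) ^ d - x ^ d ≤ |(x + 1) ^ d - x ^ d| := le_abs_self _
    _ ≤ |x + 1 - x| * d * max |x + 1| |x| ^ (d - 1) := abs_pow_sub_pow_le ..
    _ = d * (x + 1) ^ (d - 1) := by
      rw [abs_of_nonneg hx1, abs_of_nonneg hx, max_eq_left (by linarith)]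
      simp

theorem sub_one_mul_sum_pow_mul_pow_le {q : K} (hq : 0 ≤ q) {d : ℕ} (hd : 1 ≤ d) (n : ℕ) :
    (q - 1) * ∑ k ∈ range (n + 1), ((n : K) + 1 - k) ^ d * q ^ k ≤
      d * q * ∑ k ∈ range (n + 1), ((n : K) + 1 - k) ^ (d - 1) * q ^ k := by
  have h_last : ((n : K) + 1 - ((n + 1 : ℕ) : K)) ^ d = 0 := by
    rw [Nat.cast_succ, sub_self, zero_pow (by omega)]
  have h_first : 0 ≤ ((n : K) + 1 - ((0 : ℕ) : K)) ^ d := by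
    rw [Nat.cast_zero, sub_zero]
    positivity
  rw [sub_one_mul_sum_mul_pow (fun k ↦ ((n : K) + 1 - k) ^ d), h_last, zero_mul, add_zero,
    mul_sum]
  refine (sub_le_self _ h_first).trans (sum_le_sum fun k hk ↦ ?_)
  have hx : 0 ≤ (n : K) - k := sub_nonneg.2 (Nat.cast_le.2 (Nat.lt_succ_iff.1 (mem_range.1 hk)))
  have h_diff := add_one_pow_sub_pow_le hx d
  rw [sub_add_eq_add_sub] at h_diff
  calc (((n : K) + 1 - k) ^ d - ((n : K) + 1 - (k + 1 : ℕ)) ^ d) * q ^ (k + 1)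
      = (((n : K) + 1 - k) ^ d - ((n : K) - k) ^ d) * q ^ (k + 1) := by push_cast; ring
    _ ≤ d * ((n : K) + 1 - k) ^ (d - 1) * q ^ (k + 1) := by gcongr
    _ = d * q * (((n : K) + 1 - k) ^ (d - 1) * q ^ k) := by ring

end OrderedField

/-- for `α > 0`, integers `d ≥ 1`, `n ≥ 0`,
`∑_{k=0}^n (n+1-k)^d e^{kα} ≤ (d e^α/(e^α - 1)) ∑_{k=0}^n (n+1-k)^{d-1} e^{kα}`. -/
theorem stmt_16 (α : ℝ) (hα : 0 < α) (d n : ℕ) (hd : 1 ≤ d) :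
    (∑ k ∈ Finset.range (n + 1), ((n : ℝ) + 1 - k) ^ d * Real.exp (k * α)) ≤
      (d : ℝ) * Real.exp α / (Real.exp α - 1) *
        ∑ k ∈ Finset.range (n + 1), ((n : ℝ) + 1 - k) ^ (d - 1) * Real.exp (k * α) := by
  have hq : 1 < exp α := one_lt_exp_iff.2 hα
  simp only [exp_nat_mul]
  rw [div_mul_eq_mul_div, le_div_iff₀ (sub_pos.2 hq), mul_comm]
  exact sub_one_mul_sum_pow_mul_pow_le (exp_pos α).le hd n
end

section
/- Let q > 1, let Q be an open subset of ℝ^N × ℝ, and let u, v be nonnegative functions on Q that are twice continuously differentiable in the space variable and once in the time variable, satisfying ∂_t u − Δu + u^q = 0 and ∂_t v − Δv + v^q = 0 on Q, with v ≤ u on Q. Let c > 0 and set w = (1+c)v − c u. If w ≥ 0 on Q, then ∂_t w − Δw + w^q ≥ 0 on Q, i.e. w is a supersolution of the equation. -/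
/-!
The operators `∂_t` and `Δ` are linear, so with `L = ∂_t - Δ` and `w = (1+c)v - cu` the equations
for `u` and `v` give `L w = (1+c) L v - c L u = c u^q - (1+c) v^q`. Since
`v = (c/(1+c)) u + (1/(1+c)) w` is a convex combination of the nonnegative numbers `u` and `w`,
convexity of `s ↦ s^q` gives `(1+c) v^q ≤ c u^q + w^q`, that is `L w + w^q ≥ 0`.
-/

open InnerProductSpace Laplacian

theorem EuclideanSpace.laplacian_eq_sum_iteratedFDeriv_single {ι F : Type*} [Fintype ι]
    [DecidableEq ι] [NormedAddCommGroup F] [NormedSpace ℝ F]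
    (f : EuclideanSpace ℝ ι → F) (x : EuclideanSpace ℝ ι) :
    Δ f x = ∑ i, iteratedFDeriv ℝ 2 f x ![EuclideanSpace.single i 1, EuclideanSpace.single i 1] := by
  simp [laplacian_eq_iteratedFDeriv_orthonormalBasis f (EuclideanSpace.basisFun ι ℝ)]

theorem ContDiffAt.laplacian_const_mul_sub_const_mul {E : Type*} [NormedAddCommGroup E]
    [InnerProductSpace ℝ E] [FiniteDimensional ℝ E] {f g : E → ℝ} {x : E}
    (hf : ContDiffAt ℝ 2 f x) (hg : ContDiffAt ℝ 2 g x) (a b : ℝ) :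
    Δ (fun y => a * f y - b * g y) x = a * Δ f x - b * Δ g x := by
  calc Δ (fun y => a * f y - b * g y) x = Δ (a • f - b • g) x := rfl
    _ = Δ (a • f) x - Δ (b • g) x := (hf.const_smul a).laplacian_sub (hg.const_smul b)
    _ = a * Δ f x - b * Δ g x := by rw [laplacian_smul a hf, laplacian_smul b hg]; rfl

theorem one_add_mul_rpow_sub_mul_rpow_le {q c a b : ℝ} (hq : 1 ≤ q) (hc : 0 ≤ c) (ha : 0 ≤ a)
    (hw : 0 ≤ (1 + c) * b - c * a) :
    (1 + c) * b ^ q - c * a ^ q ≤ ((1 + c) * b - c * a) ^ q := by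
  have h1c : 0 < 1 + c := by linarith
  have hb : c / (1 + c) * a + 1 / (1 + c) * ((1 + c) * b - c * a) = b := by
    field_simp; ring
  have hconv := (convexOn_rpow hq).2 ha hw (by positivity : 0 ≤ c / (1 + c))
    (by positivity : 0 ≤ 1 / (1 + c)) (by field_simp; ring)
  simp only [smul_eq_mul, hb] at hconv
  calc (1 + c) * b ^ q - c * a ^ q
      ≤ (1 + c) * (c / (1 + c) * a ^ q + 1 / (1 + c) * ((1 + c) * b - c * a) ^ q) - c * a ^ q := by
        gcongr
    _ = ((1 + c) * b - c * a) ^ q := by field_simp; ring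

theorem stmt_17_general (N : ℕ) (q : ℝ) (hq : 1 < q)
    (Q : Set (EuclideanSpace ℝ (Fin N) × ℝ))
    (u v : EuclideanSpace ℝ (Fin N) → ℝ → ℝ)
    (hu0 : ∀ p ∈ Q, 0 ≤ u p.1 p.2)
    (hux : ∀ p ∈ Q, ContDiffAt ℝ 2 (fun y => u y p.2) p.1)
    (hvx : ∀ p ∈ Q, ContDiffAt ℝ 2 (fun y => v y p.2) p.1)
    (hut : ∀ p ∈ Q, DifferentiableAt ℝ (u p.1) p.2)
    (hvt : ∀ p ∈ Q, DifferentiableAt ℝ (v p.1) p.2)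
    (hueq : ∀ p ∈ Q,
      deriv (u p.1) p.2 -
        (∑ i : Fin N, iteratedFDeriv ℝ 2 (fun y => u y p.2) p.1
          ![EuclideanSpace.single i 1, EuclideanSpace.single i 1]) +
        u p.1 p.2 ^ q = 0)
    (hveq : ∀ p ∈ Q,
      deriv (v p.1) p.2 -
        (∑ i : Fin N, iteratedFDeriv ℝ 2 (fun y => v y p.2) p.1
          ![EuclideanSpace.single i 1, EuclideanSpace.single i 1]) +
        v p.1 p.2 ^ q = 0)
    (c : ℝ) (hc : 0 < c)
    (hw0 : ∀ p ∈ Q, 0 ≤ (1 + c) * v p.1 p.2 - c * u p.1 p.2) :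
    ∀ p ∈ Q,
      0 ≤ deriv (fun s => (1 + c) * v p.1 s - c * u p.1 s) p.2 -
          (∑ i : Fin N, iteratedFDeriv ℝ 2
            (fun y => (1 + c) * v y p.2 - c * u y p.2) p.1
            ![EuclideanSpace.single i 1, EuclideanSpace.single i 1]) +
          ((1 + c) * v p.1 p.2 - c * u p.1 p.2) ^ q := by
  intro p hp
  have hu := hueq p hp
  have hv := hveq p hp
  simp only [← EuclideanSpace.laplacian_eq_sum_iteratedFDeriv_single] at hu hv ⊢
  have hdt : deriv (fun s => (1 + c) * v p.1 s - c * u p.1 s) p.2 =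
      (1 + c) * deriv (v p.1) p.2 - c * deriv (u p.1) p.2 :=
    (((hvt p hp).hasDerivAt.const_mul (1 + c)).sub ((hut p hp).hasDerivAt.const_mul c)).deriv
  rw [hdt, (hvx p hp).laplacian_const_mul_sub_const_mul (hux p hp)]
  have hconv := one_add_mul_rpow_sub_mul_rpow_le hq.le hc.le (hu0 p hp) (hw0 p hp)
  linear_combination c * hu - (1 + c) * hv + hconv

/-- if `u, v ≥ 0` solve `∂_t w - Δw + w^q = 0` on an open set `Q`,
`v ≤ u` on `Q`, and `w = (1+c)v - cu ≥ 0` on `Q`, then `w` is a supersolution: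
`∂_t w - Δw + w^q ≥ 0` on `Q`.  Here the Laplacian is written as the sum of the
second derivatives in the coordinate directions. -/
theorem stmt_17 (N : ℕ) (hN : 1 ≤ N) (q : ℝ) (hq : 1 < q)
    (Q : Set (EuclideanSpace ℝ (Fin N) × ℝ)) (hQ : IsOpen Q)
    (u v : EuclideanSpace ℝ (Fin N) → ℝ → ℝ)
    (hu0 : ∀ p ∈ Q, 0 ≤ u p.1 p.2) (hv0 : ∀ p ∈ Q, 0 ≤ v p.1 p.2)
    (hvu : ∀ p ∈ Q, v p.1 p.2 ≤ u p.1 p.2)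
    (hux : ∀ p ∈ Q, ContDiffAt ℝ 2 (fun y => u y p.2) p.1)
    (hvx : ∀ p ∈ Q, ContDiffAt ℝ 2 (fun y => v y p.2) p.1)
    (hut : ∀ p ∈ Q, DifferentiableAt ℝ (u p.1) p.2)
    (hvt : ∀ p ∈ Q, DifferentiableAt ℝ (v p.1) p.2)
    (hueq : ∀ p ∈ Q,
      deriv (u p.1) p.2 -
        (∑ i : Fin N, iteratedFDeriv ℝ 2 (fun y => u y p.2) p.1
          ![EuclideanSpace.single i 1, EuclideanSpace.single i 1]) +
        u p.1 p.2 ^ q = 0)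
    (hveq : ∀ p ∈ Q,
      deriv (v p.1) p.2 -
        (∑ i : Fin N, iteratedFDeriv ℝ 2 (fun y => v y p.2) p.1
          ![EuclideanSpace.single i 1, EuclideanSpace.single i 1]) +
        v p.1 p.2 ^ q = 0)
    (c : ℝ) (hc : 0 < c)
    (hw0 : ∀ p ∈ Q, 0 ≤ (1 + c) * v p.1 p.2 - c * u p.1 p.2) :
    ∀ p ∈ Q,
      0 ≤ deriv (fun s => (1 + c) * v p.1 s - c * u p.1 s) p.2 -
          (∑ i : Fin N, iteratedFDeriv ℝ 2
            (fun y => (1 + c) * v y p.2 - c * u y p.2) p.1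
            ![EuclideanSpace.single i 1, EuclideanSpace.single i 1]) +
          ((1 + c) * v p.1 p.2 - c * u p.1 p.2) ^ q :=
  stmt_17_general N q hq Q u v hu0 hux hvx hut hvt hueq hveq c hc hw0
end
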